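/- arXiv:2211.09994 — 4 statements merged into one kernel-verified Lean document; each statement's English description precedes it below -/
import Mathlib

section
/- ℕ with the cofinite topology is s-well-filtered: for every filtered (under inclusion) family K of nonempty strongly compact saturated sets and every open set U, ⋂K ⊆ U implies that some member of K is contained in U. -/
/-- The upward closure of a set w.r.t. the specialization preorder. -/
def upClo {X : Type*} [TopologicalSpace X] (A : Set X) : Set X :=
  {x | ∃ a ∈ A, a ∈ closure {x}}

/-- `A` is strongly compact if every open `U ⊇ A` admits a nonempty finite `F`
with `A ⊆ ↑F ⊆ U`. -/
def StronglyCompact {X : Type*} [TopologicalSpace X] (A : Set X) : Prop :=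
  ∀ U : Set X, IsOpen U → A ⊆ U →
    ∃ F : Set X, F.Finite ∧ F.Nonempty ∧ A ⊆ upClo F ∧ upClo F ⊆ U

/-- A set is saturated if it equals the intersection of the open sets containing it. -/
def IsSaturatedSet {X : Type*} [TopologicalSpace X] (A : Set X) : Prop :=
  A = ⋂₀ {U : Set X | IsOpen U ∧ A ⊆ U}

lemma sc_finite {X : Type*} [TopologicalSpace X] [T1Space X] {A : Set X}
    (h : StronglyCompact A) : A.Finite := by
  obtain ⟨F, hF, -, hAF, -⟩ := h Set.univ isOpen_univ (Set.subset_univ A)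
  refine hF.subset (hAF.trans ?_)
  intro x ⟨a, haF, hax⟩
  rw [closure_singleton, Set.mem_singleton_iff] at hax
  rwa [← hax]

/-- ℕ with the cofinite topology is s-well-filtered. -/
theorem stmt7 (K : Set (Set (CofiniteTopology ℕ))) (hne : K.Nonempty)
    (hfilt : ∀ K1 ∈ K, ∀ K2 ∈ K, ∃ K3 ∈ K, K3 ⊆ K1 ∩ K2)
    (hmem : ∀ A ∈ K, A.Nonempty ∧ StronglyCompact A ∧ IsSaturatedSet A)
    (U : Set (CofiniteTopology ℕ)) (hU : IsOpen U) (hsub : ⋂₀ K ⊆ U) :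
    ∃ A ∈ K, A ⊆ U := by
  have hfin : ∀ A ∈ K, A.Finite := fun A hA => sc_finite (hmem A hA).2.1
  -- pick A ∈ K of minimal ncard
  have hex : ∃ n, ∃ A ∈ K, A.ncard = n := ⟨hne.choose.ncard, hne.choose, hne.choose_spec, rfl⟩
  classical
  obtain ⟨A, hAK, hAcard⟩ := Nat.find_spec hex
  have hmin : ∀ B ∈ K, A.ncard ≤ B.ncard := by
    intro B hB
    rw [hAcard]
    exact Nat.find_le ⟨B, hB, rfl⟩
  refine ⟨A, hAK, fun x hx => hsub ?_⟩
  rw [Set.mem_sInter]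
  intro B hB
  obtain ⟨C, hCK, hCsub⟩ := hfilt A hAK B hB
  have hCA : C ⊆ A := hCsub.trans Set.inter_subset_left
  have : C = A := Set.eq_of_subset_of_ncard_le hCA (hmin C hCK) (hfin A hAK)
  exact (hCsub.trans Set.inter_subset_right) (this ▸ hx)
end

section
/- Every well-filtered T0 space is a d-space: if X is T0 and for every filtered family K of nonempty compact saturated sets and open U with ⋂K ⊆ U some K ∈ K satisfies K ⊆ U, then every directed subset D of X (in the specialization order) has a supremum, and this supremum lies in the closure of D. -/
/-- Every well-filtered T0 space is a d-space: every directed set `D` (in the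
specialization order `x ≤ y ↔ x ∈ closure {y}`) has a supremum, which lies in the
closure of `D`. -/
theorem stmt12 {X : Type*} [TopologicalSpace X] [T0Space X]
    (hwf : ∀ K : Set (Set X), K.Nonempty →
      (∀ K1 ∈ K, ∀ K2 ∈ K, ∃ K3 ∈ K, K3 ⊆ K1 ∩ K2) →
      (∀ A ∈ K, A.Nonempty ∧ IsCompact A ∧ IsSaturatedSet A) →
      ∀ U : Set X, IsOpen U → ⋂₀ K ⊆ U → ∃ A ∈ K, A ⊆ U)
    (D : Set X) (hne : D.Nonempty)
    (hdir : ∀ a ∈ D, ∀ b ∈ D, ∃ c ∈ D, a ∈ closure {c} ∧ b ∈ closure {c}) :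
    ∃ s : X, (∀ d ∈ D, d ∈ closure {s}) ∧
      (∀ t : X, (∀ d ∈ D, d ∈ closure {t}) → s ∈ closure {t}) ∧
      s ∈ closure D := by
  -- membership criterion for closure of a singleton
  have haux : ∀ d x : X, d ∈ closure ({x} : Set X) ↔
      ∀ U : Set X, IsOpen U → d ∈ U → x ∈ U := by
    intro d x
    rw [mem_closure_iff]
    constructor
    · intro h U hU hd
      obtain ⟨y, hy1, hy2⟩ := h U hU hd
      rw [Set.mem_singleton_iff] at hy2; subst hy2; exact hy1
    · intro h U hU hd
      exact ⟨x, h U hU hd, rfl⟩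
  -- the "upper set" of a point
  set up : X → Set X := fun d => {x | d ∈ closure ({x} : Set X)} with hup
  have hrefl : ∀ d : X, d ∈ up d := fun d => subset_closure rfl
  have htrans : ∀ a c x : X, a ∈ closure ({c} : Set X) → x ∈ up c → x ∈ up a := by
    intro a c x hac hxc
    rw [Set.mem_setOf_eq, haux] at *
    intro U hU ha
    exact hxc U hU (hac U hU ha)
  have hsub : ∀ d : X, ∀ U : Set X, IsOpen U → d ∈ U → up d ⊆ U := by
    intro d U hU hd x hx
    rw [Set.mem_setOf_eq, haux] at hx
    exact hx U hU hd
  set K : Set (Set X) := up '' D with hK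
  have hKne : K.Nonempty := hne.image up
  have hfil : ∀ K1 ∈ K, ∀ K2 ∈ K, ∃ K3 ∈ K, K3 ⊆ K1 ∩ K2 := by
    rintro _ ⟨a, ha, rfl⟩ _ ⟨b, hb, rfl⟩
    obtain ⟨c, hc, hac, hbc⟩ := hdir a ha b hb
    exact ⟨up c, ⟨c, hc, rfl⟩, fun x hx => ⟨htrans a c x hac hx, htrans b c x hbc hx⟩⟩
  have hprops : ∀ A ∈ K, A.Nonempty ∧ IsCompact A ∧ IsSaturatedSet A := by
    rintro _ ⟨d, _, rfl⟩
    refine ⟨⟨d, hrefl d⟩, ?_, ?_⟩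
    · -- compact
      apply isCompact_of_finite_subcover
      intro ι U hUo hcov
      obtain ⟨i, hi⟩ := Set.mem_iUnion.mp (hcov (hrefl d))
      exact ⟨{i}, by
        intro x hx
        simp only [Finset.mem_singleton, Set.mem_iUnion]
        exact ⟨i, by simp, hsub d (U i) (hUo i) hi hx⟩⟩
    · -- saturated
      apply Set.Subset.antisymm
      · intro x hx
        exact fun U hU => hU.2 hx
      · intro x hx
        rw [Set.mem_setOf_eq, haux]
        intro U hU hd
        exact hx U ⟨hU, hsub d U hU hd⟩
  -- well-filteredness applied to the complement of the closure of D
  have key : ¬ (⋂₀ K ⊆ (closure D)ᶜ) := by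
    intro h
    obtain ⟨A, hA, hAsub⟩ := hwf K hKne hfil hprops (closure D)ᶜ
      (isClosed_closure.isOpen_compl) h
    obtain ⟨d, hd, rfl⟩ := hA
    exact hAsub (hrefl d) (subset_closure hd)
  rw [Set.not_subset] at key
  obtain ⟨s, hsK, hsD⟩ := key
  rw [Set.notMem_compl_iff] at hsD
  refine ⟨s, ?_, ?_, hsD⟩
  · intro d hd
    exact hsK (up d) ⟨d, hd, rfl⟩
  · intro t ht
    have : D ⊆ closure ({t} : Set X) := ht
    exact closure_minimal this isClosed_closure hsD
end

section
/- Every s-well-filtered T0 space is a d-space: if the well-filteredness condition holds for filtered families of nonempty strongly compact saturated sets, then every directed set D in the specialization order has a supremum lying in the closure of D. -/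
lemma clos_trans {X : Type*} [TopologicalSpace X] {a b x : X}
    (h1 : a ∈ closure ({b} : Set X)) (h2 : b ∈ closure ({x} : Set X)) :
    a ∈ closure ({x} : Set X) :=
  closure_minimal (Set.singleton_subset_iff.2 h2) isClosed_closure h1

lemma mem_upClo_singleton {X : Type*} [TopologicalSpace X] {d x : X} :
    x ∈ upClo ({d} : Set X) ↔ d ∈ closure ({x} : Set X) := by
  simp [upClo]

/-- Every s-well-filtered T0 space is a d-space: every directed set `D` (in the
specialization order) has a supremum lying in the closure of `D`. -/
theorem stmt14 {X : Type*} [TopologicalSpace X] [T0Space X]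
    (hswf : ∀ K : Set (Set X), K.Nonempty →
      (∀ K1 ∈ K, ∀ K2 ∈ K, ∃ K3 ∈ K, K3 ⊆ K1 ∩ K2) →
      (∀ A ∈ K, A.Nonempty ∧ StronglyCompact A ∧ IsSaturatedSet A) →
      ∀ U : Set X, IsOpen U → ⋂₀ K ⊆ U → ∃ A ∈ K, A ⊆ U)
    (D : Set X) (hne : D.Nonempty)
    (hdir : ∀ a ∈ D, ∀ b ∈ D, ∃ c ∈ D, a ∈ closure {c} ∧ b ∈ closure {c}) :
    ∃ s : X, (∀ d ∈ D, d ∈ closure {s}) ∧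
      (∀ t : X, (∀ d ∈ D, d ∈ closure {t}) → s ∈ closure {t}) ∧
      s ∈ closure D := by
  set K : Set (Set X) := (fun d => upClo ({d} : Set X)) '' D with hK
  have hKne : K.Nonempty := hne.image _
  have hfil : ∀ K1 ∈ K, ∀ K2 ∈ K, ∃ K3 ∈ K, K3 ⊆ K1 ∩ K2 := by
    rintro _ ⟨a, ha, rfl⟩ _ ⟨b, hb, rfl⟩
    obtain ⟨c, hc, hac, hbc⟩ := hdir a ha b hb
    refine ⟨upClo {c}, ⟨c, hc, rfl⟩, ?_⟩
    intro x hx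
    rw [mem_upClo_singleton] at hx
    exact ⟨mem_upClo_singleton.2 (clos_trans hac hx),
      mem_upClo_singleton.2 (clos_trans hbc hx)⟩
  have hprop : ∀ A ∈ K, A.Nonempty ∧ StronglyCompact A ∧ IsSaturatedSet A := by
    rintro _ ⟨d, hd, rfl⟩
    refine ⟨⟨d, mem_upClo_singleton.2 (subset_closure rfl)⟩, ?_, ?_⟩
    · intro U hU hsub
      exact ⟨{d}, Set.finite_singleton d, Set.singleton_nonempty d,
        subset_rfl, hsub⟩
    · apply Set.Subset.antisymm
      · intro x hx
        exact fun U hU => hU.2 hx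
      · intro x hx
        rw [mem_upClo_singleton]
        by_contra hdx
        have hUop : IsOpen (closure ({x} : Set X))ᶜ := isClosed_closure.isOpen_compl
        have hsub : upClo ({d} : Set X) ⊆ (closure ({x} : Set X))ᶜ := by
          intro y hy hyc
          exact hdx (clos_trans (mem_upClo_singleton.1 hy) hyc)
        exact (hx _ ⟨hUop, hsub⟩) (subset_closure rfl)
  -- main application
  have key : ¬ (⋂₀ K ⊆ (closure D)ᶜ) := by
    intro hsub
    obtain ⟨_, ⟨d, hd, rfl⟩, hAU⟩ := hswf K hKne hfil hprop _
      isClosed_closure.isOpen_compl hsub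
    exact hAU (mem_upClo_singleton.2 (subset_closure rfl)) (subset_closure hd)
  rw [Set.not_subset] at key
  obtain ⟨s, hsK, hs⟩ := key
  have hsD : s ∈ closure D := not_not.1 hs
  have hub : ∀ d ∈ D, d ∈ closure ({s} : Set X) := by
    intro d hd
    exact mem_upClo_singleton.1 (hsK _ ⟨d, hd, rfl⟩)
  refine ⟨s, hub, ?_, hsD⟩
  intro t ht
  have : D ⊆ closure ({t} : Set X) := fun d hd => ht d hd
  exact closure_minimal this isClosed_closure hsD
end

section
/- In the sum space Z = Σ_X Y_x (with the topology whose open sets are those U with every slice (U)_x open in Y_x and (U)_X open in X), if each Y_x is an irreducible T0 space, then the specialization order on Z is characterized by: (y₀,x₀) ≤ (y₁,x₁) iff either (x₀ = x₁ and y₀ ≤ y₁ in Y_{x₀}), or (x₀ < x₁ in X and y₁ is the greatest element of Y_{x₁}). -/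
/-- For the sum space `Z = Σ_X Y_x` of irreducible T0 spaces over a T0 space, with
the topology whose open sets are those with open slices and open nonempty-slice
projection, the specialization order is: `(y₀,x₀) ≤ (y₁,x₁)` iff either `x₀ = x₁`
and `y₀ ≤ y₁` in `Y_{x₀}`, or `x₀ < x₁` in `X` and `y₁` is the greatest element
of `Y_{x₁}`. -/
theorem stmt17 {X : Type*} [TopologicalSpace X] [T0Space X] (Y : X → Type*)
    [∀ x, TopologicalSpace (Y x)] [∀ x, T0Space (Y x)]
    (hirr : ∀ x, Nonempty (Y x) ∧ ∀ U V : Set (Y x), IsOpen U → IsOpen V →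
      U.Nonempty → V.Nonempty → (U ∩ V).Nonempty)
    (t : TopologicalSpace (Σ x, Y x))
    (ht : ∀ U : Set (Σ x, Y x), t.IsOpen U ↔
      ((∀ x, IsOpen {y : Y x | (⟨x, y⟩ : Σ x, Y x) ∈ U}) ∧
        IsOpen {x : X | {y : Y x | (⟨x, y⟩ : Σ x, Y x) ∈ U}.Nonempty})) :
    ∀ (x₀ x₁ : X) (y₀ : Y x₀) (y₁ : Y x₁),
      (⟨x₀, y₀⟩ : Σ x, Y x) ∈ @closure _ t {⟨x₁, y₁⟩} ↔
        ((∃ h : x₀ = x₁, (h ▸ y₀) ∈ closure ({y₁} : Set (Y x₁))) ∨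
          (x₀ ∈ closure ({x₁} : Set X) ∧ x₀ ≠ x₁ ∧
            ∀ V : Set (Y x₁), IsOpen V → V.Nonempty → y₁ ∈ V)) := by
  letI := t
  classical
  intro x₀ x₁ y₀ y₁
  rw [mem_closure_iff]
  constructor
  · intro H
    by_cases hx : x₀ = x₁
    · subst hx
      left
      refine ⟨rfl, ?_⟩
      rw [mem_closure_iff]
      intro V hV hy₀
      -- use U = (Sigma.mk x₀ '' V) ∪ {p | p.1 ≠ x₀}
      set U : Set (Σ x, Y x) := (Sigma.mk x₀ '' V) ∪ {p | p.1 ≠ x₀} with hUdef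
      have hslice : ∀ x, {y : Y x | (⟨x, y⟩ : Σ x, Y x) ∈ U} =
          if h : x = x₀ then h ▸ V else Set.univ := by
        intro x
        by_cases h : x = x₀
        · subst h
          simp only [dif_pos rfl]
          ext y
          simp [hUdef, Set.mem_image, sigma_mk_injective.eq_iff]
        · simp only [dif_neg h]
          ext y
          simp [hUdef, h]
      have hUopen : t.IsOpen U := by
        rw [ht]
        constructor
        · intro x
          rw [hslice]
          by_cases h : x = x₀
          · subst h; simpa using hV
          · simp [h]
        · have : {x : X | {y : Y x | (⟨x, y⟩ : Σ x, Y x) ∈ U}.Nonempty} = Set.univ := by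
            ext x
            simp only [Set.mem_setOf_eq, Set.mem_univ, iff_true, hslice]
            by_cases h : x = x₀
            · subst h; simpa using ⟨y₀, hy₀⟩
            · simp only [dif_neg h]; exact ⟨(hirr x).1.some, trivial⟩
          rw [this]; exact isOpen_univ
      have hmem : (⟨x₀, y₀⟩ : Σ x, Y x) ∈ U := Or.inl ⟨y₀, hy₀, rfl⟩
      obtain ⟨p, hpU, hp⟩ := H U hUopen hmem
      rw [Set.mem_singleton_iff] at hp
      subst hp
      have : y₁ ∈ {y : Y x₀ | (⟨x₀, y⟩ : Σ x, Y x) ∈ U} := hpU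
      rw [hslice] at this
      simp only [dif_pos rfl] at this
      exact ⟨y₁, this, rfl⟩
    · right
      refine ⟨?_, hx, ?_⟩
      · rw [mem_closure_iff]
        intro W hW hx₀W
        set U : Set (Σ x, Y x) := {p | p.1 ∈ W} with hUdef
        have hUopen : t.IsOpen U := by
          rw [ht]
          constructor
          · intro x
            by_cases h : x ∈ W
            · have : {y : Y x | (⟨x, y⟩ : Σ x, Y x) ∈ U} = Set.univ := by
                ext y; simp [hUdef, h]
              rw [this]; exact isOpen_univ
            · have : {y : Y x | (⟨x, y⟩ : Σ x, Y x) ∈ U} = ∅ := by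
                ext y; simp [hUdef, h]
              rw [this]; exact isOpen_empty
          · have : {x : X | {y : Y x | (⟨x, y⟩ : Σ x, Y x) ∈ U}.Nonempty} = W := by
              ext x
              simp only [Set.mem_setOf_eq, hUdef]
              constructor
              · rintro ⟨y, hy⟩; exact hy
              · intro h; exact ⟨(hirr x).1.some, h⟩
            rw [this]; exact hW
        obtain ⟨p, hpU, hp⟩ := H U hUopen hx₀W
        rw [Set.mem_singleton_iff] at hp
        subst hp
        exact ⟨x₁, hpU, rfl⟩
      · intro V hV hVne
        set U : Set (Σ x, Y x) := (Sigma.mk x₁ '' V) ∪ {p | p.1 ≠ x₁} with hUdef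
        have hslice : ∀ x, {y : Y x | (⟨x, y⟩ : Σ x, Y x) ∈ U} =
            if h : x = x₁ then h ▸ V else Set.univ := by
          intro x
          by_cases h : x = x₁
          · subst h
            simp only [dif_pos rfl]
            ext y
            simp [hUdef, Set.mem_image, sigma_mk_injective.eq_iff]
          · simp only [dif_neg h]
            ext y
            simp [hUdef, h]
        have hUopen : t.IsOpen U := by
          rw [ht]
          constructor
          · intro x
            rw [hslice]
            by_cases h : x = x₁
            · subst h; simpa using hV
            · simp [h]
          · have : {x : X | {y : Y x | (⟨x, y⟩ : Σ x, Y x) ∈ U}.Nonempty} = Set.univ := by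
              ext x
              simp only [Set.mem_setOf_eq, Set.mem_univ, iff_true, hslice]
              by_cases h : x = x₁
              · subst h; simpa using hVne
              · simp only [dif_neg h]; exact ⟨(hirr x).1.some, trivial⟩
            rw [this]; exact isOpen_univ
        have hmem : (⟨x₀, y₀⟩ : Σ x, Y x) ∈ U := Or.inr hx
        obtain ⟨p, hpU, hp⟩ := H U hUopen hmem
        rw [Set.mem_singleton_iff] at hp
        subst hp
        have : y₁ ∈ {y : Y x₁ | (⟨x₁, y⟩ : Σ x, Y x) ∈ U} := hpU
        rw [hslice] at this
        simpa using this
  · rintro (⟨h, hy⟩ | ⟨hcl, hne, hgr⟩)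
    · subst h
      intro U hU hmem
      replace hU := (ht U).mp hU
      have hsl := hU.1 x₀
      rw [mem_closure_iff] at hy
      obtain ⟨y, hyU, hy1⟩ := hy _ hsl hmem
      rw [Set.mem_singleton_iff] at hy1
      subst hy1
      exact ⟨⟨x₀, y⟩, hyU, rfl⟩
    · intro U hU hmem
      replace hU := (ht U).mp hU
      rw [mem_closure_iff] at hcl
      have hx₀P : x₀ ∈ {x : X | {y : Y x | (⟨x, y⟩ : Σ x, Y x) ∈ U}.Nonempty} := ⟨y₀, hmem⟩
      obtain ⟨x, hxP, hx1⟩ := hcl _ hU.2 hx₀P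
      rw [Set.mem_singleton_iff] at hx1
      rw [hx1] at hxP
      have : y₁ ∈ {y : Y x₁ | (⟨x₁, y⟩ : Σ x, Y x) ∈ U} := hgr _ (hU.1 x₁) hxP
      exact ⟨⟨x₁, y₁⟩, this, rfl⟩
end
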